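/- arXiv:2112.07142 — 2 statements merged into one kernel-verified Lean document; each statement's English description precedes it below -/
import Mathlib

section
/- For every t > 1 with √(π/(4t)) < 1, ∫_{ℝ⁴} e^{−|ξ|²} sin²(t|ξ|²)/|ξ|⁴ dξ ≥ (ω₄ e^{−1}/8)(log t + log 4 − log π), where ω₄ is the surface area of the unit sphere in ℝ⁴. -/
/-!
In polar coordinates the integral is `ω₄ ∫₀^∞ e^{-r²} sin²(t r²) / r dr`, and the substitution
`u = r²` turns this into `(ω₄ / 2) ∫₀^∞ e^{-u} sin²(t u) / u du`. Keep only `u ∈ [π/(4t), 1]`,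
where `e^{-u} ≥ e^{-1}`, and write `sin²(t u) = (1 - cos (2 t u)) / 2`: the `1/u` part contributes
`½ log (4t/π)`, while `∫ cos (2 t u) / u du = ∫_{π/2}^{2t} cos v / v dv ≤ 0`, as one sees by
comparing with the derivative of `(sin v - 1) / v`. This even gives the constant `e^{-1}/4`.
-/

open MeasureTheory

/-- surface area of the unit sphere in ℝⁿ, via ω_n = n · vol(unit ball) -/
noncomputable def omegaSurf (n : ℕ) : ℝ :=
  n * (volume (Metric.ball (0 : EuclideanSpace ℝ (Fin n)) 1)).toReal

open Real Set intervalIntegral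

lemma integral_fun_norm_euclideanSpace {F : Type*} [NormedAddCommGroup F] [NormedSpace ℝ F]
    (n : ℕ) [NeZero n] (f : ℝ → F) :
    ∫ ξ : EuclideanSpace ℝ (Fin n), f ‖ξ‖ = omegaSurf n • ∫ y in Ioi 0, y ^ (n - 1) • f y := by
  rw [integral_fun_norm_addHaar, finrank_euclideanSpace_fin, omegaSurf, ← smul_smul,
    Nat.cast_smul_eq_nsmul, measureReal_def]

lemma integral_cos_div_nonpos {x : ℝ} (hx : π / 2 ≤ x) : ∫ v in π / 2..x, cos v / v ≤ 0 := by
  have hpos : ∀ v ∈ uIcc (π / 2) x, 0 < v := fun v hv =>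
    pi_div_two_pos.trans_le (uIcc_of_le hx ▸ hv).1
  have hderiv : ∀ v ∈ uIcc (π / 2) x,
      HasDerivAt (fun v => (sin v - 1) / v) (cos v / v - (sin v - 1) / v ^ 2) v := by
    intro v hv
    refine (((hasDerivAt_sin v).sub_const 1).div (hasDerivAt_id' v) (hpos v hv).ne').congr_deriv ?_
    field_simp [(hpos v hv).ne']
  have hcos : IntervalIntegrable (fun v => cos v / v) volume (π / 2) x :=
    (continuous_cos.continuousOn.div continuousOn_id fun v hv => (hpos v hv).ne').intervalIntegrable
  have hsin : IntervalIntegrable (fun v => (sin v - 1) / v ^ 2) volume (π / 2) x :=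
    ((continuous_sin.sub continuous_const).continuousOn.div (continuous_pow 2).continuousOn
      fun v hv => pow_ne_zero 2 (hpos v hv).ne').intervalIntegrable
  have hftc := integral_eq_sub_of_hasDerivAt hderiv (hcos.sub hsin)
  rw [integral_sub hcos hsin, sin_pi_div_two, sub_self, zero_div, sub_zero] at hftc
  have hboundary : (sin x - 1) / x ≤ 0 :=
    div_nonpos_of_nonpos_of_nonneg (by linarith [sin_le_one x]) (hpos x right_mem_uIcc).le
  have hrest : ∫ v in π / 2..x, (sin v - 1) / v ^ 2 ≤ 0 := by
    rw [integral_of_le hx]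
    exact integral_nonpos fun v =>
      div_nonpos_of_nonpos_of_nonneg (by linarith [sin_le_one v]) (sq_nonneg v)
  linarith

lemma integral_cos_mul_div {c : ℝ} (hc : c ≠ 0) (a b : ℝ) :
    ∫ u in a..b, cos (c * u) / u = ∫ v in c * a..c * b, cos v / v := by
  have h : ∀ u, cos (c * u) / u = c * (cos (c * u) / (c * u)) := fun u => by
    rcases eq_or_ne u 0 with rfl | hu
    · simp
    · field_simp
  simp_rw [h]
  rw [intervalIntegral.integral_const_mul, integral_comp_mul_left (fun v => cos v / v) hc,
    smul_eq_mul, mul_inv_cancel_left₀ hc]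

lemma half_log_le_integral_sin_sq_div {t b : ℝ} (ht : 0 < t) (hb : π / (4 * t) ≤ b) :
    log (b / (π / (4 * t))) / 2 ≤ ∫ u in π / (4 * t)..b, sin (t * u) ^ 2 / u := by
  set a := π / (4 * t)
  have ha : 0 < a := by positivity
  have hpos : ∀ u ∈ uIcc a b, 0 < u := fun u hu => ha.trans_le (uIcc_of_le hb ▸ hu).1
  have hsq : ∀ u, sin (t * u) ^ 2 / u = u⁻¹ / 2 - cos (2 * t * u) / u / 2 := fun u => by
    rw [sin_sq_eq_half_sub, mul_assoc]; ring
  have hinv : IntervalIntegrable (fun u => u⁻¹) volume a b :=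
    (continuousOn_inv₀.mono fun u hu => (hpos u hu).ne').intervalIntegrable
  have hcos : IntervalIntegrable (fun u => cos (2 * t * u) / u) volume a b :=
    ((continuous_cos.comp (continuous_const.mul continuous_id)).continuousOn.div continuousOn_id
      fun u hu => (hpos u hu).ne').intervalIntegrable
  have hcos_nonpos : ∫ u in a..b, cos (2 * t * u) / u ≤ 0 := by
    have hta : 2 * t * a = π / 2 := by simp only [a]; field_simp; ring
    rw [integral_cos_mul_div (by positivity), hta]
    exact integral_cos_div_nonpos (hta ▸ mul_le_mul_of_nonneg_left hb (by positivity))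
  simp_rw [hsq]
  rw [integral_sub (hinv.div_const 2) (hcos.div_const 2), intervalIntegral.integral_div,
    intervalIntegral.integral_div, integral_inv_of_pos ha (ha.trans_le hb)]
  linarith

lemma integral_Ioi_comp_sq_div (g : ℝ → ℝ) :
    ∫ y in Ioi 0, g (y ^ 2) / y = (∫ u in Ioi 0, g u / u) / 2 := by
  rw [← integral_comp_rpow_Ioi (fun u => g u / u) two_ne_zero, ← MeasureTheory.integral_div]
  refine setIntegral_congr_fun measurableSet_Ioi fun y (hy : 0 < y) => ?_
  rw [rpow_two, abs_two, smul_eq_mul, show (2 : ℝ) - 1 = 1 by norm_num, rpow_one]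
  field_simp

lemma integrableOn_exp_neg_mul_sin_sq_div (t : ℝ) :
    IntegrableOn (fun u => exp (-u) * sin (t * u) ^ 2 / u) (Ioi 0) := by
  have hgamma : IntegrableOn (fun u => t ^ 2 * (exp (-u) * u ^ ((2 : ℝ) - 1))) (Ioi 0) :=
    (GammaIntegral_convergent two_pos).const_mul _
  refine hgamma.mono' (Measurable.aestronglyMeasurable (by fun_prop))
    (ae_restrict_of_forall_mem measurableSet_Ioi fun u (hu : 0 < u) => ?_)
  have hsin : sin (t * u) ^ 2 ≤ (t * u) ^ 2 := sin_sq_le_sq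
  rw [norm_of_nonneg (by positivity), div_le_iff₀ hu]
  norm_num
  nlinarith [exp_pos (-u)]

lemma exp_neg_one_mul_log_le_integral_exp_neg_mul_sin_sq_div {t : ℝ} (ht : π / 4 ≤ t) :
    exp (-1) * log (4 * t / π) / 2 ≤ ∫ u in Ioi 0, exp (-u) * sin (t * u) ^ 2 / u := by
  have ht0 : 0 < t := by linarith [pi_pos]
  set a := π / (4 * t)
  have ha : 0 < a := by positivity
  have ha1 : a ≤ 1 := by rw [div_le_one (by positivity)]; linarith
  have hpos : ∀ u ∈ uIcc a 1, 0 < u := fun u hu => ha.trans_le (uIcc_of_le ha1 ▸ hu).1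
  have hIoc_subset : Ioc a 1 ⊆ Ioi 0 := Ioc_subset_Ioi_self.trans (Ioi_subset_Ioi ha.le)
  have hint : IntervalIntegrable (fun u => sin (t * u) ^ 2 / u) volume a 1 :=
    ((by fun_prop : Continuous fun u => sin (t * u) ^ 2).continuousOn.div continuousOn_id
      fun u hu => (hpos u hu).ne').intervalIntegrable
  calc exp (-1) * log (4 * t / π) / 2
      = exp (-1) * (log (1 / a) / 2) := by
        simp only [a]; rw [one_div_div]; ring
    _ ≤ exp (-1) * ∫ u in a..1, sin (t * u) ^ 2 / u :=
        mul_le_mul_of_nonneg_left (half_log_le_integral_sin_sq_div ht0 ha1) (exp_pos _).le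
    _ = ∫ u in a..1, exp (-1) * (sin (t * u) ^ 2 / u) :=
        (intervalIntegral.integral_const_mul _ _).symm
    _ ≤ ∫ u in a..1, exp (-u) * sin (t * u) ^ 2 / u := by
        refine integral_mono_on ha1 (hint.const_mul _)
          ((intervalIntegrable_iff_integrableOn_Ioc_of_le ha1).mpr
            ((integrableOn_exp_neg_mul_sin_sq_div t).mono_set hIoc_subset)) fun u hu => ?_
        have hu0 : 0 < u := ha.trans_le hu.1
        rw [mul_div_assoc]
        exact mul_le_mul_of_nonneg_right (exp_le_exp.mpr (by linarith [hu.2])) (by positivity)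
    _ ≤ ∫ u in Ioi 0, exp (-u) * sin (t * u) ^ 2 / u := by
        rw [integral_of_le ha1]
        exact setIntegral_mono_set (integrableOn_exp_neg_mul_sin_sq_div t)
          (ae_restrict_of_forall_mem measurableSet_Ioi fun u (hu : 0 < u) => by positivity)
          hIoc_subset.eventuallyLE

theorem U_log_lower_bound_general (t : ℝ) (ht : 1 < t) :
    ∫ ξ : EuclideanSpace ℝ (Fin 4),
        Real.exp (-‖ξ‖ ^ 2) * Real.sin (t * ‖ξ‖ ^ 2) ^ 2 / ‖ξ‖ ^ 4 ≥
      (omegaSurf 4 * Real.exp (-1) / 8) *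
        (Real.log t + Real.log 4 - Real.log Real.pi) := by
  have ht0 : 0 < t := one_pos.trans ht
  have hlog : log t + log 4 - log π = log (4 * t / π) := by
    rw [log_div (by positivity) pi_ne_zero, log_mul four_ne_zero ht0.ne']; ring
  have hlog_nonneg : 0 ≤ log (4 * t / π) :=
    log_nonneg (by rw [le_div_iff₀ pi_pos]; linarith [pi_le_four])
  have hradial : ∫ y in Ioi 0, y ^ 3 * (exp (-y ^ 2) * sin (t * y ^ 2) ^ 2 / y ^ 4) =
      (∫ u in Ioi 0, exp (-u) * sin (t * u) ^ 2 / u) / 2 := by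
    rw [← integral_Ioi_comp_sq_div fun u => exp (-u) * sin (t * u) ^ 2]
    refine setIntegral_congr_fun measurableSet_Ioi fun y (hy : 0 < y) => ?_
    field_simp
  have hbound := exp_neg_one_mul_log_le_integral_exp_neg_mul_sin_sq_div
    (by linarith [pi_le_four] : π / 4 ≤ t)
  have homega : 0 ≤ omegaSurf 4 := by unfold omegaSurf; positivity
  rw [ge_iff_le, integral_fun_norm_euclideanSpace 4
    fun y => exp (-y ^ 2) * sin (t * y ^ 2) ^ 2 / y ^ 4, hlog]
  simp only [smul_eq_mul, Nat.add_one_sub_one]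
  rw [hradial, mul_div_assoc, mul_assoc]
  refine mul_le_mul_of_nonneg_left ?_ homega
  nlinarith [mul_nonneg (exp_pos (-1)).le hlog_nonneg]

theorem U_log_lower_bound (t : ℝ) (ht : 1 < t)
    (hθ : Real.sqrt (Real.pi / (4 * t)) < 1) :
    ∫ ξ : EuclideanSpace ℝ (Fin 4),
        Real.exp (-‖ξ‖ ^ 2) * Real.sin (t * ‖ξ‖ ^ 2) ^ 2 / ‖ξ‖ ^ 4 ≥
      (omegaSurf 4 * Real.exp (-1) / 8) *
        (Real.log t + Real.log 4 - Real.log Real.pi) :=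
  U_log_lower_bound_general t ht
end

section
/- There exists a constant C > 0 such that for all sufficiently large t > 1, ∫₀^∞ e^{−r²} sin²(t r²) r^{−1} dr ≥ C log t. -/
/-!
Keep only the range `1/√t < r ≤ 1`, where `e^{-r²} ≥ e^{-1}`, and the substitution `u = t r²`
turns `∫ sin²(t r²) / r dr` into `½ ∫₁ᵗ sin² u / u du`. Since `sin² u = (1 - cos 2u)/2`, the last
integral is `½ log t` up to an oscillatory term `∫ cos 2u / u du` that stays bounded; concretely,
`H u = log u / 2 + (1 - sin 2u) / (4u)` has `H' ≤ sin² u / u` and `H t - H 1 ≥ (log t - 1)/2`.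
-/

open MeasureTheory Set Real intervalIntegral

lemma integrableOn_exp_neg_sq_mul_sin_sq_div (t : ℝ) :
    IntegrableOn (fun r => exp (-r ^ 2) * sin (t * r ^ 2) ^ 2 / r) (Ioi 0) := by
  have hdom : IntegrableOn (fun r : ℝ => |t| * (r ^ (1 : ℝ) * exp (-1 * r ^ 2))) (Ioi 0) :=
    (integrableOn_rpow_mul_exp_neg_mul_sq one_pos (by norm_num)).const_mul _
  refine hdom.mono' ?_ ((ae_restrict_iff' measurableSet_Ioi).2 (ae_of_all _ fun r hr => ?_))
  · exact (ContinuousOn.div (by fun_prop) continuousOn_id fun r hr => (mem_Ioi.1 hr).ne')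
      |>.aestronglyMeasurable measurableSet_Ioi
  · have hr : 0 < r := hr
    have hsin : sin (t * r ^ 2) ^ 2 ≤ |t| * r ^ 2 := calc
      sin (t * r ^ 2) ^ 2 ≤ |sin (t * r ^ 2)| := by
        rw [← sq_abs]; exact sq_le (abs_nonneg _) (abs_sin_le_one _)
      _ ≤ |t * r ^ 2| := abs_sin_le_abs
      _ = |t| * r ^ 2 := by rw [abs_mul, abs_of_nonneg (sq_nonneg r)]
    rw [norm_of_nonneg (by positivity), rpow_one, neg_one_mul, div_le_iff₀ hr]
    calc exp (-r ^ 2) * sin (t * r ^ 2) ^ 2 ≤ exp (-r ^ 2) * (|t| * r ^ 2) := by gcongr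
      _ = |t| * (r * exp (-r ^ 2)) * r := by ring

lemma integral_comp_mul_sq_div {g : ℝ → ℝ} (hg : Continuous g) {t a b : ℝ} (ht : t ≠ 0)
    (ha : 0 < a) (hb : 0 < b) :
    ∫ r in a..b, g (t * r ^ 2) / r = (∫ u in t * a ^ 2..t * b ^ 2, g u / u) / 2 := by
  have hpos : ∀ r ∈ uIcc a b, 0 < r := fun r hr => (lt_min ha hb).trans_le hr.1
  have hderiv : ∀ r ∈ uIcc a b, HasDerivAt (fun r => t * r ^ 2) (2 * t * r) r := fun r _ => by
    simpa [mul_comm, mul_left_comm] using (hasDerivAt_pow 2 r).const_mul t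
  have hcont : ContinuousOn (fun u => g u / u / 2) ((fun r => t * r ^ 2) '' uIcc a b) := by
    refine (hg.continuousOn.div continuousOn_id ?_).div_const 2
    rintro _ ⟨r, hr, rfl⟩
    exact mul_ne_zero ht (pow_ne_zero 2 (hpos r hr).ne')
  rw [← intervalIntegral.integral_div, ← integral_comp_mul_deriv' hderiv (by fun_prop) hcont]
  refine integral_congr fun r hr => ?_
  have := hpos r hr
  simp only [Function.comp_apply]
  field_simp

lemma log_sub_one_div_two_le_integral_sin_sq_div {t : ℝ} (ht : 1 ≤ t) :
    (log t - 1) / 2 ≤ ∫ u in (1 : ℝ)..t, sin u ^ 2 / u := by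
  set H : ℝ → ℝ := fun u => log u / 2 + (1 - sin (2 * u)) / (4 * u)
  have hpos : ∀ u ∈ Icc 1 t, 0 < u := fun u hu => one_pos.trans_le hu.1
  have hderiv : ∀ u, 0 < u →
      HasDerivAt H (sin u ^ 2 / u - (1 - sin (2 * u)) / (4 * u ^ 2)) u := by
    intro u hu
    have hsin2 : HasDerivAt (fun u => sin (2 * u)) (cos (2 * u) * 2) u := by
      simpa using ((hasDerivAt_id' u).const_mul 2).sin
    have hquot := (hsin2.const_sub 1).div ((hasDerivAt_id' u).const_mul 4) (by positivity)
    refine (((hasDerivAt_log hu.ne').div_const 2).add hquot).congr_deriv ?_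
    rw [cos_two_mul, cos_sq']
    field_simp
    ring
  have hFTC : H t - H 1 ≤ ∫ u in (1 : ℝ)..t, sin u ^ 2 / u :=
    sub_le_integral_of_hasDeriv_right_of_le ht
      (fun u hu => (hderiv u (hpos u hu)).continuousAt.continuousWithinAt)
      (fun u hu => (hderiv u (hpos u (Ioo_subset_Icc_self hu))).hasDerivWithinAt)
      (ContinuousOn.integrableOn_Icc
        (ContinuousOn.div (by fun_prop) continuousOn_id fun u hu => (hpos u hu).ne'))
      (fun u _ => sub_le_self _ (div_nonneg (sub_nonneg.2 (sin_le_one _)) (by positivity)))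
  have hHt : log t / 2 ≤ H t :=
    le_add_of_nonneg_right (div_nonneg (sub_nonneg.2 (sin_le_one _)) (by positivity))
  have hH1 : H 1 ≤ 1 / 2 := by
    have := neg_one_le_sin 2
    simp only [H, log_one, mul_one, zero_div, zero_add]
    linarith
  linarith

lemma exp_neg_one_mul_integral_sin_sq_div_le {t : ℝ} (ht : 1 ≤ t) :
    exp (-1) * (∫ u in (1 : ℝ)..t, sin u ^ 2 / u) / 2 ≤
      ∫ r in Ioi 0, exp (-r ^ 2) * sin (t * r ^ 2) ^ 2 / r := by
  set a := (√t)⁻¹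
  have ha : 0 < a := by positivity
  have ha1 : a ≤ 1 := inv_le_one_of_one_le₀ (one_le_sqrt.2 ht)
  have hta : t * a ^ 2 = 1 := by
    rw [inv_pow, sq_sqrt (by positivity), mul_inv_cancel₀ (by positivity)]
  have hsub : Ioc a 1 ⊆ Ioi 0 := fun r hr => ha.trans hr.1
  calc exp (-1) * (∫ u in (1 : ℝ)..t, sin u ^ 2 / u) / 2
      = exp (-1) * ∫ r in a..1, sin (t * r ^ 2) ^ 2 / r := by
        rw [integral_comp_mul_sq_div (g := fun u => sin u ^ 2) (by fun_prop) (by positivity) ha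
          one_pos, hta, one_pow, mul_one, mul_div_assoc]
    _ = ∫ r in Ioc a 1, exp (-1) * sin (t * r ^ 2) ^ 2 / r := by
        rw [integral_of_le ha1, ← MeasureTheory.integral_const_mul]
        simp only [mul_div_assoc]
    _ ≤ ∫ r in Ioc a 1, exp (-r ^ 2) * sin (t * r ^ 2) ^ 2 / r := by
        refine setIntegral_mono_on ?_ ((integrableOn_exp_neg_sq_mul_sin_sq_div t).mono_set hsub)
          measurableSet_Ioc fun r hr => ?_
        · exact (ContinuousOn.integrableOn_Icc (ContinuousOn.div (by fun_prop) continuousOn_id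
            fun r hr => (ha.trans_le hr.1).ne')).mono_set Ioc_subset_Icc_self
        · have hr0 : 0 < r := hsub hr
          have : r ^ 2 ≤ 1 := pow_le_one₀ hr0.le hr.2
          gcongr
    _ ≤ ∫ r in Ioi 0, exp (-r ^ 2) * sin (t * r ^ 2) ^ 2 / r :=
        setIntegral_mono_set (integrableOn_exp_neg_sq_mul_sin_sq_div t)
          ((ae_restrict_iff' measurableSet_Ioi).2 (ae_of_all _ fun r (hr : 0 < r) => by positivity))
          hsub.eventuallyLE

theorem radial_log_lower_bound :
    ∃ C > 0, ∃ T > 1, ∀ t : ℝ, T ≤ t →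
      ∫ r in Set.Ioi (0 : ℝ), Real.exp (-r ^ 2) * Real.sin (t * r ^ 2) ^ 2 / r ≥
        C * Real.log t := by
  refine ⟨exp (-1) / 8, by positivity, exp 2, one_lt_exp_iff.2 two_pos, fun t hT => ?_⟩
  have ht : 1 ≤ t := (one_lt_exp_iff.2 two_pos).le.trans hT
  have hlog : 2 ≤ log t := (le_log_iff_exp_le (by positivity)).2 hT
  have hI := log_sub_one_div_two_le_integral_sin_sq_div ht
  calc exp (-1) / 8 * log t ≤ exp (-1) * ((log t - 1) / 2) / 2 := by
        nlinarith [exp_pos (-1)]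
    _ ≤ exp (-1) * (∫ u in (1 : ℝ)..t, sin u ^ 2 / u) / 2 := by gcongr
    _ ≤ _ := exp_neg_one_mul_integral_sin_sq_div_le ht
end
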